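/- arXiv:math/0207309 — 3 statements merged into one kernel-verified Lean document; each statement's English description precedes it below -/
import Mathlib

section
/- Let ℓ be a prime and let X and Y be pure submodules of a free ℤ_ℓ-module T of finite rank. If X̄ ∩ Ȳ = 0 in T/ℓT, then X + Y is a pure submodule of T and the sum is direct, i.e. X ∩ Y = 0. [Lemma 3.8(iv)] -/
/-
If `ℓ t = x + y` with `x ∈ X`, `y ∈ Y`, then `x̄ = -ȳ` lies in `X̄ ∩ Ȳ = 0`, so `x, y ∈ ℓT`, and
purity of `X` and `Y` lets one divide by `ℓ` inside each of them; hence `t ∈ X + Y`. For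
`t ∈ X ∩ Y` the same argument applied to `t + (-t) = 0` gives `X ∩ Y ⊆ ℓ (X ∩ Y)`, so `X ∩ Y = 0`
by Nakayama. Over the discrete valuation ring `ℤ_ℓ`, having no `ℓ`-torsion already means being
torsion-free.
-/

open Pointwise

namespace Submodule

variable {R M : Type*} [CommRing R] [AddCommGroup M] [Module R M]

theorem mem_of_sub_mem_of_disjoint_map_mkQ {X Y P : Submodule R M}
    (h : Disjoint (X.map P.mkQ) (Y.map P.mkQ)) {x y : M} (hx : x ∈ X) (hy : y ∈ Y)
    (hxy : x - y ∈ P) : x ∈ P := by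
  rw [← Quotient.mk_eq_zero]
  refine disjoint_def.mp h _ (mem_map_of_mem hx) ?_
  rw [(Quotient.eq P).mpr hxy]
  exact mem_map_of_mem hy

variable {a : R} {X Y : Submodule R M}

theorem isSMulRegular_quotient_sup (hX : IsSMulRegular (M ⧸ X) a) (hY : IsSMulRegular (M ⧸ Y) a)
    (h : Disjoint (X.map (a • ⊤ : Submodule R M).mkQ) (Y.map (a • ⊤ : Submodule R M).mkQ)) :
    IsSMulRegular (M ⧸ (X ⊔ Y)) a := by
  refine (isSMulRegular_quotient_iff_mem_of_smul_mem _ _).mpr fun t ht => ?_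
  obtain ⟨x, hx, y, hy, hxy⟩ := mem_sup.mp ht
  have hyP : y ∈ a • (⊤ : Submodule R M) :=
    mem_of_sub_mem_of_disjoint_map_mkQ h.symm hy (neg_mem hx)
      (by rw [sub_neg_eq_add, add_comm, hxy]; exact smul_mem_pointwise_smul _ _ _ trivial)
  obtain ⟨y', -, rfl⟩ := (mem_smul_pointwise_iff_exists _ _ _).mp hyP
  have hty' : a • (t - y') ∈ X := by rwa [smul_sub, ← hxy, add_sub_cancel_right]
  simpa using add_mem_sup (mem_of_isSMulRegular_quotient_of_smul_mem hX hty')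
    (mem_of_isSMulRegular_quotient_of_smul_mem hY hy)

theorem inf_le_pointwise_smul_inf (hX : IsSMulRegular (M ⧸ X) a) (hY : IsSMulRegular (M ⧸ Y) a)
    (h : Disjoint (X.map (a • ⊤ : Submodule R M).mkQ) (Y.map (a • ⊤ : Submodule R M).mkQ)) :
    X ⊓ Y ≤ a • (X ⊓ Y) := by
  rintro t ⟨htX, htY⟩
  obtain ⟨s, -, rfl⟩ := (mem_smul_pointwise_iff_exists _ _ _).mp
    (mem_of_sub_mem_of_disjoint_map_mkQ h htX htY (by simp))
  exact smul_mem_pointwise_smul _ _ _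
    ⟨mem_of_isSMulRegular_quotient_of_smul_mem hX htX,
      mem_of_isSMulRegular_quotient_of_smul_mem hY htY⟩

theorem eq_bot_of_le_pointwise_smul [IsLocalRing R] (ha : a ∈ IsLocalRing.maximalIdeal R)
    {N : Submodule R M} (hN : N.FG) (h : N ≤ a • N) : N = ⊥ :=
  eq_bot_of_le_smul_of_le_jacobson_bot (Ideal.span {a}) N hN
    (by rwa [ideal_span_singleton_smul])
    (((Ideal.span_singleton_le_iff_mem _).mpr ha).trans (IsLocalRing.maximalIdeal_le_jacobson ⊥))

end Submodule

theorem IsDiscreteValuationRing.noZeroSMulDivisors_of_isSMulRegular {R M : Type*} [CommRing R]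
    [IsDomain R] [IsDiscreteValuationRing R] [AddCommGroup M] [Module R M] {ϖ : R}
    (hϖ : Irreducible ϖ) (h : IsSMulRegular M ϖ) : NoZeroSMulDivisors R M := by
  refine ⟨fun {a m} ham => or_iff_not_imp_left.mpr fun ha => ?_⟩
  obtain ⟨n, u, rfl⟩ := eq_unit_mul_pow_irreducible ha hϖ
  exact (u.isUnit.isSMulRegular M).mul (h.pow n) (ham.trans (smul_zero _).symm)

theorem brumer_kramer_lemma_3_8_iv_general
    {ℓ : ℕ} [Fact (Nat.Prime ℓ)] {T : Type*} [AddCommGroup T] [Module ℤ_[ℓ] T]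
    [Module.Finite ℤ_[ℓ] T]
    (X Y : Submodule ℤ_[ℓ] T)
    (hX : NoZeroSMulDivisors ℤ_[ℓ] (T ⧸ X)) (hY : NoZeroSMulDivisors ℤ_[ℓ] (T ⧸ Y))
    (ℓT : Submodule ℤ_[ℓ] T) (hℓT : ℓT = (ℓ : ℤ_[ℓ]) • (⊤ : Submodule ℤ_[ℓ] T))
    (hbar : X.map ℓT.mkQ ⊓ Y.map ℓT.mkQ = ⊥) :
    NoZeroSMulDivisors ℤ_[ℓ] (T ⧸ (X ⊔ Y)) ∧ X ⊓ Y = ⊥ := by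
  subst hℓT
  have hℓ : (ℓ : ℤ_[ℓ]) ≠ 0 := PadicInt.irreducible_p.ne_zero
  have hXℓ : IsSMulRegular (T ⧸ X) (ℓ : ℤ_[ℓ]) := IsSMulRegular.of_ne_zero hℓ
  have hYℓ : IsSMulRegular (T ⧸ Y) (ℓ : ℤ_[ℓ]) := IsSMulRegular.of_ne_zero hℓ
  have hdisj := disjoint_iff.mpr hbar
  exact ⟨IsDiscreteValuationRing.noZeroSMulDivisors_of_isSMulRegular PadicInt.irreducible_p
      (Submodule.isSMulRegular_quotient_sup hXℓ hYℓ hdisj),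
    Submodule.eq_bot_of_le_pointwise_smul
      ((IsLocalRing.mem_maximalIdeal _).mpr PadicInt.irreducible_p.not_isUnit)
      (IsNoetherian.noetherian _) (Submodule.inf_le_pointwise_smul_inf hXℓ hYℓ hdisj)⟩

/-- Lemma 3.8(iv): if `X`, `Y` are pure submodules of a free `ℤ_ℓ`-module `T` of
finite rank and `X̄ ⊓ Ȳ = 0` in `T/ℓT`, then `X + Y` is pure and the sum is direct. -/
theorem brumer_kramer_lemma_3_8_iv
    {ℓ : ℕ} [Fact (Nat.Prime ℓ)] {T : Type*} [AddCommGroup T] [Module ℤ_[ℓ] T]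
    [Module.Free ℤ_[ℓ] T] [Module.Finite ℤ_[ℓ] T]
    (X Y : Submodule ℤ_[ℓ] T)
    (hX : NoZeroSMulDivisors ℤ_[ℓ] (T ⧸ X)) (hY : NoZeroSMulDivisors ℤ_[ℓ] (T ⧸ Y))
    (ℓT : Submodule ℤ_[ℓ] T) (hℓT : ℓT = (ℓ : ℤ_[ℓ]) • (⊤ : Submodule ℤ_[ℓ] T))
    (hbar : X.map ℓT.mkQ ⊓ Y.map ℓT.mkQ = ⊥) :
    NoZeroSMulDivisors ℤ_[ℓ] (T ⧸ (X ⊔ Y)) ∧ X ⊓ Y = ⊥ :=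
  brumer_kramer_lemma_3_8_iv_general X Y hX hY ℓT hℓT hbar
end

section
/- Let ℓ be a prime, T a free ℤ_ℓ-module of finite rank, and G a group acting ℤ_ℓ-linearly on T. Let W be a ℤ_ℓ-submodule of T stabilized by a subgroup H of G. For n ≥ 0 set W_n = W + ℓ^n T, and let S be the set of integers n ≥ 0 such that W_n is stabilized by all of G. Let N be a subset of G such that for every n ∈ S, each element g ∈ N acts on W_n/ℓW_n by a homothety (i.e., there is a scalar α ∈ ℤ_ℓ with g·w ≡ αw mod ℓW_n for all w ∈ W_n). If H together with N generates G, then G stabilizes W. [Module-theoretic content of Lemma 4.6] -/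
/-!
Write `𝔪 = (ℓ)` and `Wₙ = W + 𝔪ⁿT`; by induction on `n`, `G` stabilizes every `Wₙ` (`W₀ = T`).
If `G` stabilizes `Wₙ`, then `H` stabilizes `Wₙ₊₁` since it stabilizes `W` and `T`. An element
`g ∈ N` with `g ≡ α` on `Wₙ` modulo `𝔪Wₙ` maps `Wₙ₊₁` into itself because `𝔪Wₙ ⊆ Wₙ₊₁ ⊆ Wₙ`,
and so does `g⁻¹ ≡ α⁻¹` when `α` is a unit; when `α ∈ 𝔪`, `g` maps `Wₙ` into `𝔪Wₙ`, so `Wₙ = 0`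
by Nakayama. Finally `W = ⋂ₙ Wₙ` by Krull's intersection theorem in `T/W`.
-/

open Pointwise IsLocalRing

namespace Submodule

variable {R M : Type*} [CommRing R] [AddCommGroup M] [Module R M]

theorem iInf_sup_pow_smul_top_eq [IsNoetherianRing R] [Module.Finite R M] {I : Ideal R}
    (hI : I ≤ Ideal.jacobson ⊥) (W : Submodule R M) : ⨅ n : ℕ, (W ⊔ I ^ n • ⊤) = W := by
  have hquot : ∀ n : ℕ, W ⊔ I ^ n • ⊤ = (I ^ n • ⊤ : Submodule R (M ⧸ W)).comap W.mkQ := by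
    intro n
    rw [← comap_map_mkQ, map_smul'', map_top, range_mkQ]
  simp only [hquot, ← comap_iInf, Ideal.iInf_pow_smul_eq_bot_of_le_jacobson I hI]
  exact W.ker_mkQ

theorem smul_sup_pow_smul_top_le (I : Ideal R) (W : Submodule R M) (n : ℕ) :
    I • (W ⊔ I ^ n • ⊤) ≤ W ⊔ I ^ (n + 1) • ⊤ := by
  rw [smul_sup, pow_succ', mul_smul]
  exact sup_le_sup_right smul_le_right _

theorem sup_pow_succ_smul_top_le (I : Ideal R) (W : Submodule R M) (n : ℕ) :
    W ⊔ I ^ (n + 1) • ⊤ ≤ W ⊔ I ^ n • ⊤ :=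
  sup_le_sup_left (smul_mono_left (Ideal.pow_le_pow_right n.le_succ)) _

theorem map_le_of_sub_smul_mem {f : M →ₗ[R] M} {I : Ideal R} {α : R} {V V' : Submodule R M}
    (hα : ∀ w ∈ V, f w - α • w ∈ I • V) (hIV : I • V ≤ V') (hV' : V' ≤ V) : V'.map f ≤ V' := by
  rintro _ ⟨w, hw, rfl⟩
  simpa using V'.add_mem (hIV (hα w (hV' hw))) (V'.smul_mem α hw)

end Submodule

namespace Representation

variable {R G M : Type*} [CommRing R] [Group G] [AddCommGroup M] [Module R M]
  (ρ : Representation R G M)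

theorem map_map_inv (g : G) (V : Submodule R M) : (V.map (ρ g⁻¹)).map (ρ g) = V := by
  rw [← Submodule.map_comp, ← Module.End.mul_eq_comp, ← map_mul, mul_inv_cancel, map_one,
    Module.End.one_eq_id, Submodule.map_id]

def stabilizer (V : Submodule R M) : Subgroup G where
  carrier := {g | V.map (ρ g) = V}
  one_mem' := by simp [Module.End.one_eq_id]
  mul_mem' {a b} (ha : V.map (ρ a) = V) (hb : V.map (ρ b) = V) := by
    rw [Set.mem_ofPred_eq, map_mul, Module.End.mul_eq_comp, Submodule.map_comp, hb, ha]
  inv_mem' {a} (ha : V.map (ρ a) = V) := by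
    calc V.map (ρ a⁻¹) = (V.map (ρ a)).map (ρ a⁻¹) := by rw [ha]
      _ = V := by simpa only [inv_inv] using ρ.map_map_inv a⁻¹ V

variable {ρ}

theorem mem_stabilizer_iff {V : Submodule R M} {g : G} :
    g ∈ ρ.stabilizer V ↔ V.map (ρ g) = V :=
  Iff.rfl

theorem inv_apply_mem {V : Submodule R M} {g : G} (hg : g ∈ ρ.stabilizer V) {w : M}
    (hw : w ∈ V) : ρ g⁻¹ w ∈ V :=
  mem_stabilizer_iff.1 ((ρ.stabilizer V).inv_mem hg) ▸ Submodule.mem_map_of_mem hw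

theorem mem_stabilizer_of_map_le {V : Submodule R M} {g : G} (h : V.map (ρ g) ≤ V)
    (h_inv : V.map (ρ g⁻¹) ≤ V) : g ∈ ρ.stabilizer V :=
  le_antisymm h <| calc
    V = (V.map (ρ g⁻¹)).map (ρ g) := (ρ.map_map_inv g V).symm
    _ ≤ V.map (ρ g) := Submodule.map_mono h_inv

theorem le_stabilizer_of_map_le {V : Submodule R M} {K : Subgroup G}
    (h : ∀ g ∈ K, V.map (ρ g) ≤ V) : K ≤ ρ.stabilizer V :=
  fun g hg => mem_stabilizer_of_map_le (h g hg) (h g⁻¹ (K.inv_mem hg))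

theorem stabilizer_eq_top_iff {V : Submodule R M} :
    ρ.stabilizer V = ⊤ ↔ ∀ g : G, ∀ w ∈ V, ρ g w ∈ V := by
  refine ⟨fun h g w hw => ?_, fun h => top_le_iff.1 (le_stabilizer_of_map_le ?_)⟩
  · rw [← mem_stabilizer_iff.1 (h ▸ Subgroup.mem_top g : g ∈ ρ.stabilizer V)]
    exact Submodule.mem_map_of_mem hw
  · rintro g - _ ⟨w, hw, rfl⟩
    exact h g w hw

theorem stabilizer_top : ρ.stabilizer ⊤ = ⊤ :=
  stabilizer_eq_top_iff.2 fun _ _ _ => Submodule.mem_top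

theorem stabilizer_bot : ρ.stabilizer ⊥ = ⊤ :=
  stabilizer_eq_top_iff.2 fun g w hw => by simp [(Submodule.mem_bot R).1 hw]

theorem inf_stabilizer_le_stabilizer_sup (V V' : Submodule R M) :
    ρ.stabilizer V ⊓ ρ.stabilizer V' ≤ ρ.stabilizer (V ⊔ V') := by
  rintro g ⟨hV, hV'⟩
  rw [mem_stabilizer_iff, Submodule.map_sup, mem_stabilizer_iff.1 hV, mem_stabilizer_iff.1 hV']

theorem stabilizer_le_stabilizer_smul (I : Ideal R) (V : Submodule R M) :
    ρ.stabilizer V ≤ ρ.stabilizer (I • V) := by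
  intro g hg
  rw [mem_stabilizer_iff, Submodule.map_smul'', mem_stabilizer_iff.1 hg]

theorem inv_sub_smul_mem {I : Ideal R} {V : Submodule R M} {g : G} (hg : g ∈ ρ.stabilizer V)
    {u : Rˣ} (hu : ∀ w ∈ V, ρ g w - (u : R) • w ∈ I • V) :
    ∀ w ∈ V, ρ g⁻¹ w - ((u⁻¹ : Rˣ) : R) • w ∈ I • V := by
  intro w hw
  have key : ρ g⁻¹ w - ((u⁻¹ : Rˣ) : R) • w =
      -(((u⁻¹ : Rˣ) : R) • (ρ g (ρ g⁻¹ w) - (u : R) • ρ g⁻¹ w)) := by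
    rw [self_inv_apply, smul_sub, smul_smul, Units.inv_mul, one_smul, neg_sub]
  rw [key]
  exact neg_mem (Submodule.smul_mem _ _ (hu _ (inv_apply_mem hg hw)))

variable [IsLocalRing R]

theorem eq_bot_of_sub_smul_mem {V : Submodule R M} (hV : V.FG) {g : G}
    (hg : g ∈ ρ.stabilizer V) {α : R} (hα_mem : α ∈ maximalIdeal R)
    (hα : ∀ w ∈ V, ρ g w - α • w ∈ maximalIdeal R • V) : V = ⊥ := by
  refine Submodule.eq_bot_of_le_smul_of_le_jacobson_bot _ V hV ?_ (maximalIdeal_le_jacobson _)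
  intro w hw
  have hv := inv_apply_mem hg hw
  rw [← ρ.self_inv_apply g w, ← sub_add_cancel (ρ g (ρ g⁻¹ w)) (α • ρ g⁻¹ w)]
  exact Submodule.add_mem _ (hα _ hv) (Submodule.smul_mem_smul hα_mem hv)

theorem mem_stabilizer_of_sub_smul_mem {V V' : Submodule R M} (hV : V.FG) {g : G}
    (hg : g ∈ ρ.stabilizer V) {α : R} (hα : ∀ w ∈ V, ρ g w - α • w ∈ maximalIdeal R • V)
    (hmV : maximalIdeal R • V ≤ V') (hV' : V' ≤ V) : g ∈ ρ.stabilizer V' := by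
  by_cases hunit : IsUnit α
  · obtain ⟨u, rfl⟩ := hunit
    exact mem_stabilizer_of_map_le (Submodule.map_le_of_sub_smul_mem hα hmV hV')
      (Submodule.map_le_of_sub_smul_mem (inv_sub_smul_mem hg hα) hmV hV')
  · have hV_bot := eq_bot_of_sub_smul_mem hV hg ((mem_maximalIdeal α).2 hunit) hα
    rw [le_bot_iff.1 (hV_bot ▸ hV' : V' ≤ ⊥), stabilizer_bot]
    exact Subgroup.mem_top g

variable [IsNoetherianRing R] [Module.Finite R M]

theorem stabilizer_sup_pow_succ_smul_top_eq_top {W : Submodule R M} {H : Subgroup G}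
    (hH : H ≤ ρ.stabilizer W) {N : Set G} (hgen : Subgroup.closure ((H : Set G) ∪ N) = ⊤)
    {n : ℕ} (hn : ρ.stabilizer (W ⊔ maximalIdeal R ^ n • ⊤) = ⊤)
    (hN : ∀ g ∈ N, ∃ α : R, ∀ w ∈ W ⊔ maximalIdeal R ^ n • ⊤,
      ρ g w - α • w ∈ maximalIdeal R • (W ⊔ maximalIdeal R ^ n • ⊤)) :
    ρ.stabilizer (W ⊔ maximalIdeal R ^ (n + 1) • ⊤) = ⊤ := by
  rw [eq_top_iff, ← hgen, Subgroup.closure_le]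
  rintro g (hg | hg)
  · have hg_top : g ∈ ρ.stabilizer ⊤ := by rw [stabilizer_top]; exact Subgroup.mem_top g
    exact inf_stabilizer_le_stabilizer_sup _ _ ⟨hH hg, stabilizer_le_stabilizer_smul _ _ hg_top⟩
  · obtain ⟨α, hα⟩ := hN g hg
    have hg_stab : g ∈ ρ.stabilizer (W ⊔ maximalIdeal R ^ n • ⊤) := by
      rw [hn]; exact Subgroup.mem_top g
    exact mem_stabilizer_of_sub_smul_mem (IsNoetherian.noetherian _) hg_stab hα
      (Submodule.smul_sup_pow_smul_top_le _ _ n) (Submodule.sup_pow_succ_smul_top_le _ _ n)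

end Representation

open Representation in
theorem brumer_kramer_lemma_4_6_general
    {ℓ : ℕ} [Fact (Nat.Prime ℓ)] {T : Type*} [AddCommGroup T] [Module ℤ_[ℓ] T]
    [Module.Finite ℤ_[ℓ] T]
    {G : Type*} [Group G] (ρ : Representation ℤ_[ℓ] G T)
    (W : Submodule ℤ_[ℓ] T)
    (Wn : ℕ → Submodule ℤ_[ℓ] T)
    (hWn : ∀ n : ℕ, Wn n = W ⊔ (ℓ : ℤ_[ℓ]) ^ n • (⊤ : Submodule ℤ_[ℓ] T))
    (H : Subgroup G) (hH : ∀ h ∈ H, ∀ w ∈ W, ρ h w ∈ W)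
    (N : Set G)
    (hN : ∀ n : ℕ, (∀ g : G, ∀ w ∈ Wn n, ρ g w ∈ Wn n) →
      ∀ g ∈ N, ∃ α : ℤ_[ℓ], ∀ w ∈ Wn n, ρ g w - α • w ∈ (ℓ : ℤ_[ℓ]) • Wn n)
    (hgen : Subgroup.closure ((H : Set G) ∪ N) = ⊤) :
    ∀ g : G, ∀ w ∈ W, ρ g w ∈ W := by
  have hWn_eq : ∀ n, Wn n = W ⊔ maximalIdeal ℤ_[ℓ] ^ n • ⊤ := fun n => by
    rw [hWn, PadicInt.maximalIdeal_eq_span_p, Ideal.span_singleton_pow,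
      Submodule.ideal_span_singleton_smul]
  have hN_eq : ∀ n, ρ.stabilizer (Wn n) = ⊤ → ∀ g ∈ N, ∃ α : ℤ_[ℓ], ∀ w ∈ Wn n,
      ρ g w - α • w ∈ maximalIdeal ℤ_[ℓ] • Wn n := fun n hn => by
    rw [PadicInt.maximalIdeal_eq_span_p, Submodule.ideal_span_singleton_smul]
    exact hN n (stabilizer_eq_top_iff.1 hn)
  have hHW : H ≤ ρ.stabilizer W := le_stabilizer_of_map_le fun h hh => by
    rintro _ ⟨w, hw, rfl⟩
    exact hH h hh w hw
  have hstab : ∀ n, ρ.stabilizer (Wn n) = ⊤ := by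
    intro n
    induction n with
    | zero => simp [hWn_eq, stabilizer_top]
    | succ n ih =>
      have hNn := hN_eq n ih
      rw [hWn_eq] at ih hNn ⊢
      exact stabilizer_sup_pow_succ_smul_top_eq_top hHW hgen ih hNn
  intro g w hw
  have hmem : ρ g w ∈ ⨅ n, Wn n :=
    Submodule.mem_iInf _ |>.2 fun n => stabilizer_eq_top_iff.1 (hstab n) g w
      (hWn_eq n ▸ Submodule.mem_sup_left hw)
  simpa only [hWn_eq, Submodule.iInf_sup_pow_smul_top_eq (maximalIdeal_le_jacobson _)] using hmem

/-- Module-theoretic content of Lemma 4.6: let `ρ` be a `ℤ_ℓ`-linear action of a group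
`G` on a free `ℤ_ℓ`-module `T` of finite rank, let `W` be a submodule stabilized by a
subgroup `H`, and for `n ≥ 0` set `Wₙ = W + ℓⁿT`.  Suppose `N ⊆ G` is such that whenever
`Wₙ` is stabilized by all of `G`, every `g ∈ N` acts on `Wₙ/ℓWₙ` by a homothety.
If `H` and `N` generate `G`, then `G` stabilizes `W`. -/
theorem brumer_kramer_lemma_4_6
    {ℓ : ℕ} [Fact (Nat.Prime ℓ)] {T : Type*} [AddCommGroup T] [Module ℤ_[ℓ] T]
    [Module.Free ℤ_[ℓ] T] [Module.Finite ℤ_[ℓ] T]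
    {G : Type*} [Group G] (ρ : Representation ℤ_[ℓ] G T)
    (W : Submodule ℤ_[ℓ] T)
    (Wn : ℕ → Submodule ℤ_[ℓ] T)
    (hWn : ∀ n : ℕ, Wn n = W ⊔ (ℓ : ℤ_[ℓ]) ^ n • (⊤ : Submodule ℤ_[ℓ] T))
    (H : Subgroup G) (hH : ∀ h ∈ H, ∀ w ∈ W, ρ h w ∈ W)
    (N : Set G)
    (hN : ∀ n : ℕ, (∀ g : G, ∀ w ∈ Wn n, ρ g w ∈ Wn n) →
      ∀ g ∈ N, ∃ α : ℤ_[ℓ], ∀ w ∈ Wn n, ρ g w - α • w ∈ (ℓ : ℤ_[ℓ]) • Wn n)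
    (hgen : Subgroup.closure ((H : Set G) ∪ N) = ⊤) :
    ∀ g : G, ∀ w ∈ W, ρ g w ∈ W :=
  brumer_kramer_lemma_4_6_general ρ W Wn hWn H hH N hN hgen
end

section
/- Let ℓ be a prime, T a free ℤ_ℓ-module of finite rank, and M a submodule of T. If x, y ∈ T, ℓz = x + y for some z ∈ T, and both x and y lie in pure submodules X and Y of T with X̄ ∩ Ȳ = 0 in T/ℓT, then z ∈ X + Y; consequently T/(X + Y) is torsion-free. [The key step in the proof of Lemma 3.8(iv)] -/
/-!
Since `X̄ ∩ Ȳ = 0`, reducing `x + y ∈ ℓT` modulo `ℓ` forces `x ∈ ℓT`, say `x = ℓa`. Purity of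
`X` gives `a ∈ X`, and then `ℓ(z - a) = y` with purity of `Y` gives `z - a ∈ Y`, so
`z = a + (z - a) ∈ X + Y`. Over the discrete valuation ring `ℤ_ℓ` every nonzero scalar is a
unit times a power of `ℓ`, so this divisibility by `ℓ` is all torsion-freeness of `T/(X + Y)`
requires.
-/

open Pointwise

namespace Submodule

section Ring

variable {R M : Type*} [Ring R] [AddCommGroup M] [Module R M]

theorem mem_of_smul_mem_of_noZeroSMulDivisors_quotient (W : Submodule R M)
    [NoZeroSMulDivisors R (M ⧸ W)] {r : R} (hr : r ≠ 0) {c : M} (hc : r • c ∈ W) : c ∈ W := by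
  have hrc : r • W.mkQ c = 0 := by rwa [← map_smul, mkQ_apply, Quotient.mk_eq_zero]
  rw [← Quotient.mk_eq_zero, ← mkQ_apply]
  exact (NoZeroSMulDivisors.eq_zero_or_eq_zero_of_smul_eq_zero hrc).resolve_left hr

theorem left_mem_of_add_mem_of_map_mkQ_inf_eq_bot {N X Y : Submodule R M}
    (h : X.map N.mkQ ⊓ Y.map N.mkQ = ⊥) {x y : M} (hx : x ∈ X) (hy : y ∈ Y)
    (hxy : x + y ∈ N) : x ∈ N := by
  have hmem : N.mkQ x ∈ X.map N.mkQ ⊓ Y.map N.mkQ := by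
    refine ⟨⟨x, hx, rfl⟩, -y, neg_mem hy, ?_⟩
    rw [mkQ_apply, mkQ_apply, Quotient.eq, ← neg_add', neg_mem_iff, add_comm]
    exact hxy
  rwa [h, mem_bot, mkQ_apply, Quotient.mk_eq_zero] at hmem

end Ring

section CommRing

variable {R M : Type*} [CommRing R] [AddCommGroup M] [Module R M]

theorem mem_sup_of_smul_eq_add {r : R} (hr : r ≠ 0) {X Y : Submodule R M}
    [NoZeroSMulDivisors R (M ⧸ X)] [NoZeroSMulDivisors R (M ⧸ Y)]
    (h : X.map (r • ⊤ : Submodule R M).mkQ ⊓ Y.map (r • ⊤ : Submodule R M).mkQ = ⊥)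
    {x y z : M} (hx : x ∈ X) (hy : y ∈ Y) (hz : r • z = x + y) : z ∈ X ⊔ Y := by
  have hxy : x + y ∈ r • (⊤ : Submodule R M) := hz ▸ smul_mem_pointwise_smul z r ⊤ mem_top
  obtain ⟨a, -, rfl⟩ := (mem_smul_pointwise_iff_exists x r ⊤).mp
    (left_mem_of_add_mem_of_map_mkQ_inf_eq_bot h hx hy hxy)
  have haX : a ∈ X := X.mem_of_smul_mem_of_noZeroSMulDivisors_quotient hr hx
  have hzaY : z - a ∈ Y := Y.mem_of_smul_mem_of_noZeroSMulDivisors_quotient hr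
    (by rwa [smul_sub, hz, add_sub_cancel_left])
  simpa using add_mem_sup haX hzaY

theorem noZeroSMulDivisors_quotient_of_irreducible [IsDomain R] [IsDiscreteValuationRing R]
    {ϖ : R} (hϖ : Irreducible ϖ) (W : Submodule R M) (h : ∀ t : M, ϖ • t ∈ W → t ∈ W) :
    NoZeroSMulDivisors R (M ⧸ W) := by
  have hpow : ∀ (n : ℕ) (t : M), ϖ ^ n • t ∈ W → t ∈ W := by
    intro n
    induction n with
    | zero => simp
    | succ n ih => exact fun t ht => h t (ih _ (by rwa [smul_smul, ← pow_succ]))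
  refine ⟨fun {c} m hcm => or_iff_not_imp_left.mpr fun hc => ?_⟩
  obtain ⟨t, rfl⟩ := Quotient.mk_surjective _ m
  obtain ⟨n, u, rfl⟩ := IsDiscreteValuationRing.eq_unit_mul_pow_irreducible hc hϖ
  rw [← Quotient.mk_smul, Quotient.mk_eq_zero, mul_smul] at hcm
  rw [Quotient.mk_eq_zero]
  exact hpow n t ((W.smul_mem_iff_of_isUnit u.isUnit).mp hcm)

end CommRing

end Submodule

theorem brumer_kramer_lemma_3_8_iv_key_step_general
    {ℓ : ℕ} [Fact (Nat.Prime ℓ)] {T : Type*} [AddCommGroup T] [Module ℤ_[ℓ] T]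
    (X Y : Submodule ℤ_[ℓ] T)
    (hX : NoZeroSMulDivisors ℤ_[ℓ] (T ⧸ X)) (hY : NoZeroSMulDivisors ℤ_[ℓ] (T ⧸ Y))
    (ℓT : Submodule ℤ_[ℓ] T) (hℓT : ℓT = (ℓ : ℤ_[ℓ]) • (⊤ : Submodule ℤ_[ℓ] T))
    (hbar : X.map ℓT.mkQ ⊓ Y.map ℓT.mkQ = ⊥) :
    (∀ x ∈ X, ∀ y ∈ Y, ∀ z : T, (ℓ : ℤ_[ℓ]) • z = x + y → z ∈ X ⊔ Y) ∧
      NoZeroSMulDivisors ℤ_[ℓ] (T ⧸ (X ⊔ Y)) := by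
  subst hℓT
  have key : ∀ x ∈ X, ∀ y ∈ Y, ∀ z : T, (ℓ : ℤ_[ℓ]) • z = x + y → z ∈ X ⊔ Y :=
    fun x hx y hy z hz =>
      Submodule.mem_sup_of_smul_eq_add PadicInt.irreducible_p.ne_zero hbar hx hy hz
  refine ⟨key, (X ⊔ Y).noZeroSMulDivisors_quotient_of_irreducible PadicInt.irreducible_p
    fun t ht => ?_⟩
  obtain ⟨x, hx, y, hy, hxy⟩ := Submodule.mem_sup.mp ht
  exact key x hx y hy t hxy.symm

/-- Key step in the proof of Lemma 3.8(iv): if `X`, `Y` are pure submodules of a free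
`ℤ_ℓ`-module `T` of finite rank with `X̄ ⊓ Ȳ = 0` in `T/ℓT`, then whenever `ℓz = x + y`
with `x ∈ X`, `y ∈ Y` and `z ∈ T`, one has `z ∈ X + Y`; consequently `T/(X + Y)` is
torsion-free. -/
theorem brumer_kramer_lemma_3_8_iv_key_step
    {ℓ : ℕ} [Fact (Nat.Prime ℓ)] {T : Type*} [AddCommGroup T] [Module ℤ_[ℓ] T]
    [Module.Free ℤ_[ℓ] T] [Module.Finite ℤ_[ℓ] T]
    (X Y : Submodule ℤ_[ℓ] T)
    (hX : NoZeroSMulDivisors ℤ_[ℓ] (T ⧸ X)) (hY : NoZeroSMulDivisors ℤ_[ℓ] (T ⧸ Y))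
    (ℓT : Submodule ℤ_[ℓ] T) (hℓT : ℓT = (ℓ : ℤ_[ℓ]) • (⊤ : Submodule ℤ_[ℓ] T))
    (hbar : X.map ℓT.mkQ ⊓ Y.map ℓT.mkQ = ⊥) :
    (∀ x ∈ X, ∀ y ∈ Y, ∀ z : T, (ℓ : ℤ_[ℓ]) • z = x + y → z ∈ X ⊔ Y) ∧
      NoZeroSMulDivisors ℤ_[ℓ] (T ⧸ (X ⊔ Y)) :=
  brumer_kramer_lemma_3_8_iv_key_step_general X Y hX hY ℓT hℓT hbar
end
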